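/- Let h ≥ 2 and let α₁, …, α_h ∈ x·k[[x]]. In the formal power series ring k[[x, y₁, …, y_h]], set fᵢ = (yᵢ − αᵢ)^h for each i and ξ = ∏ᵢ (yᵢ − αᵢ). Then ξ^h = f₁⋯f_h lies in the h-th power of the ideal (f₁, …, f_h), so ξ is integral over (f₁, …, f_h), but ξ ∉ (f₁, …, f_h); hence the ideal (f₁, …, f_h)k[[x, y₁, …, y_h]] is not integrally closed. -/

import Mathlib

noncomputable section

/-- `r` is integral over the ideal `I`: it satisfies a monic equation
`r^n + a₁ r^(n-1) + ⋯ + aₙ = 0` with `aᵢ ∈ Iⁱ`. -/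
def IsIntegralOverIdeal {R : Type*} [CommRing R] (I : Ideal R) (r : R) : Prop :=
  ∃ n : ℕ, 0 < n ∧ ∃ a : ℕ → R, (∀ i ∈ Finset.Icc 1 n, a i ∈ I ^ i) ∧
    r ^ n + ∑ i ∈ Finset.Icc 1 n, a i * r ^ (n - i) = 0

/-- An ideal is integrally closed if every element integral over it belongs to it. -/
def IsIntegrallyClosedIdeal {R : Type*} [CommRing R] (I : Ideal R) : Prop :=
  ∀ r : R, IsIntegralOverIdeal I r → r ∈ I

/-! Write `e = y₁⋯y_h`. Modulo `x` every `αᵢ` vanishes, so `ξ ≡ y₁⋯y_h` and the coefficient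
of `e` in `ξ` is `1`. In the grading by total degree in `x` and `yᵢ` the series `yᵢ - αᵢ` has
order at least `1`, so `fᵢ = (yᵢ - αᵢ)^h` has no monomial of degree `< h` in `x, yᵢ`. Every
exponent `q ≤ e` has degree at most `1 < h` there, so no multiple of any `fᵢ`, hence no element
of `(f₁, …, f_h)`, contains the monomial `e`. -/

theorem isIntegralOverIdeal_of_pow_mem {R : Type*} [CommRing R] {I : Ideal R} {r : R} {n : ℕ}
    (hn : 0 < n) (hr : r ^ n ∈ I ^ n) : IsIntegralOverIdeal I r := by
  refine ⟨n, hn, fun i => if i = n then -r ^ n else 0, fun i _ => ?_, ?_⟩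
  · dsimp only
    split_ifs with hi
    · subst hi
      exact neg_mem hr
    · exact zero_mem _
  · rw [Finset.sum_eq_single_of_mem n (Finset.mem_Icc.mpr ⟨hn, le_rfl⟩)
      fun i _ hi => by simp [hi]]
    simp

theorem Finsupp.weight_single_one_add_single_one {σ : Type*} [DecidableEq σ] (x t : σ)
    (f : σ →₀ ℕ) : weight (Pi.single x 1 + Pi.single t 1) f = f x + f t := by
  rw [← weight_single_one_apply x f, ← weight_single_one_apply t f, weight_apply, weight_apply,
    weight_apply, ← Finsupp.sum_add]
  simp only [Pi.add_apply, smul_add]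

namespace MvPowerSeries

open Finsupp

variable {σ R : Type*} [CommRing R]

theorem coeff_mul_eq_zero_of_forall_le {f g : MvPowerSeries σ R} {e : σ →₀ ℕ}
    (hg : ∀ q ≤ e, coeff q g = 0) : coeff e (f * g) = 0 := by
  classical
  rw [coeff_mul]
  refine Finset.sum_eq_zero fun p hp => ?_
  rw [hg p.2 (Finset.HasAntidiagonal.mem_antidiagonal.mp hp ▸ le_add_self), mul_zero]

theorem coeff_eq_zero_of_mem_span_range {ι : Type*} [Fintype ι] {f : ι → MvPowerSeries σ R}
    {e : σ →₀ ℕ} (hf : ∀ i, ∀ q ≤ e, coeff q (f i) = 0) {g : MvPowerSeries σ R}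
    (hg : g ∈ Ideal.span (Set.range f)) : coeff e g = 0 := by
  obtain ⟨c, rfl⟩ := (Submodule.mem_span_range_iff_exists_fun _).mp hg
  simp only [map_sum, smul_eq_mul, coeff_mul_eq_zero_of_forall_le (hf _), Finset.sum_const_zero]

theorem X_dvd_of_forall_coeff_ne_zero_eq_single {x : σ} {a : MvPowerSeries σ R}
    (ha : ∀ e, coeff e a ≠ 0 → ∃ n, 0 < n ∧ e = single x n) : X x ∣ a := by
  refine X_dvd_iff.mpr fun e he => by_contra fun hne => ?_
  obtain ⟨n, hn, rfl⟩ := ha e hne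
  simp [hn.ne'] at he

theorem one_le_weightedOrder_X_sub {w : σ → ℕ} {x t : σ} (hx : w x ≠ 0) (ht : w t ≠ 0)
    {a : MvPowerSeries σ R} (ha : ∀ e, coeff e a ≠ 0 → ∃ n, 0 < n ∧ e = single x n) :
    1 ≤ (X t - a).weightedOrder w := by
  classical
  refine nat_le_weightedOrder w fun d hd => by_contra fun hne => ?_
  rw [map_sub, coeff_X] at hne
  split_ifs at hne with hdt
  · simp [hdt, weight_single, ht] at hd
  · obtain ⟨n, hn, rfl⟩ := ha d (by simpa using hne)
    simp [weight_single, hx, hn.ne'] at hd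

theorem coeff_X_sub_pow_eq_zero {x t : σ} {a : MvPowerSeries σ R}
    (ha : ∀ e, coeff e a ≠ 0 → ∃ n, 0 < n ∧ e = single x n) {m : ℕ} {q : σ →₀ ℕ}
    (hq : q x + q t < m) : coeff q ((X t - a) ^ m) = 0 := by
  classical
  set w : σ → ℕ := Pi.single x 1 + Pi.single t 1
  have hwx : w x ≠ 0 := by simp [w]
  have hwt : w t ≠ 0 := by simp [w]
  have hm : (m : ℕ∞) ≤ ((X t - a) ^ m).weightedOrder w := by
    simpa using (nsmul_le_nsmul_right (one_le_weightedOrder_X_sub hwx hwt ha) m).trans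
      (le_weightedOrder_pow w m)
  refine coeff_eq_zero_of_lt_weightedOrder w (lt_of_lt_of_le ?_ hm)
  rw [weight_single_one_add_single_one]
  exact_mod_cast hq

theorem coeff_prod_X_sub_eq_coeff_prod_X {ι : Type*} (s : Finset ι) {x : σ} (y : ι → σ)
    {α : ι → MvPowerSeries σ R} (hα : ∀ i, X x ∣ α i) {e : σ →₀ ℕ} (he : e x = 0) :
    coeff e (∏ i ∈ s, (X (y i) - α i)) = coeff e (∏ i ∈ s, X (y i)) := by
  have hmod : Ideal.Quotient.mk (Ideal.span {X x}) (∏ i ∈ s, (X (y i) - α i)) =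
      Ideal.Quotient.mk (Ideal.span {X x}) (∏ i ∈ s, X (y i)) := by
    simp only [map_prod, map_sub,
      Ideal.Quotient.eq_zero_iff_mem.mpr (Ideal.mem_span_singleton.mpr (hα _)), sub_zero]
  have hdvd := Ideal.mem_span_singleton.mp (Ideal.Quotient.eq.mp hmod)
  rw [← sub_eq_zero, ← map_sub]
  exact X_dvd_iff.mp hdvd e he

theorem coeff_sum_single_prod_X {ι : Type*} (s : Finset ι) (y : ι → σ) :
    coeff (∑ i ∈ s, single (y i) 1) (∏ i ∈ s, (X (y i) : MvPowerSeries σ R)) = 1 := by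
  simp only [X_def, prod_monomial, Finset.prod_const_one, coeff_monomial_same]

theorem prod_X_sub_notMem_span_pow [Nontrivial R] {ι : Type*} [Fintype ι] {x : σ} {y : ι → σ}
    (hy : Function.Injective y) (hxy : ∀ i, y i ≠ x) {α : ι → MvPowerSeries σ R}
    (hα : ∀ i e, coeff e (α i) ≠ 0 → ∃ n, 0 < n ∧ e = single x n) {m : ℕ} (hm : 2 ≤ m) :
    ∏ i, (X (y i) - α i) ∉ Ideal.span (Set.range fun i => (X (y i) - α i) ^ m) := by
  classical
  set e : σ →₀ ℕ := ∑ i, single (y i) 1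
  have he_x : e x = 0 := by simp [e, hxy]
  have he_y : ∀ i, e (y i) = 1 := by simp [e, single_apply, hy.eq_iff]
  intro hmem
  have hcoeff : coeff e (∏ i, (X (y i) - α i)) = 1 := by
    rw [coeff_prod_X_sub_eq_coeff_prod_X _ y
      (fun i => X_dvd_of_forall_coeff_ne_zero_eq_single (hα i)) he_x, coeff_sum_single_prod_X]
  refine one_ne_zero (hcoeff ▸ coeff_eq_zero_of_mem_span_range (fun i q hq => ?_) hmem)
  refine coeff_X_sub_pow_eq_zero (hα i) ?_
  calc q x + q (y i) ≤ e x + e (y i) := add_le_add (hq x) (hq (y i))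
    _ = 1 := by rw [he_x, he_y]
    _ < m := hm

end MvPowerSeries

open MvPowerSeries in
/-- Let `h ≥ 2` and `α₁, …, α_h ∈ x·k[[x]]` inside
`k[[x, y₁, …, y_h]]` (here `x = X 0` and `yᵢ = X i.succ`, and each `αᵢ` is a power series
in `x` alone with zero constant term). With `fᵢ = (yᵢ - αᵢ)^h` and `ξ = ∏ᵢ (yᵢ - αᵢ)`, we
have `ξ^h = f₁⋯f_h ∈ (f₁, …, f_h)^h`, so `ξ` is integral over `(f₁, …, f_h)`, but
`ξ ∉ (f₁, …, f_h)`; hence `(f₁, …, f_h)` is not integrally closed. -/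
theorem product_power_ideal_not_integrally_closed
    (k : Type) [Field k] (h : ℕ) (hh : 2 ≤ h)
    (α : Fin h → MvPowerSeries (Fin (h + 1)) k)
    (hα : ∀ (i : Fin h) (e : Fin (h + 1) →₀ ℕ),
      MvPowerSeries.coeff e (α i) ≠ 0 → ∃ n : ℕ, 0 < n ∧ e = Finsupp.single 0 n) :
    (∏ i : Fin h, (MvPowerSeries.X i.succ - α i)) ^ h =
      ∏ i : Fin h, (MvPowerSeries.X i.succ - α i) ^ h ∧
    (∏ i : Fin h, (MvPowerSeries.X i.succ - α i) ^ h) ∈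
      (Ideal.span (Set.range fun i : Fin h => (MvPowerSeries.X i.succ - α i) ^ h)) ^ h ∧
    IsIntegralOverIdeal
      (Ideal.span (Set.range fun i : Fin h => (MvPowerSeries.X i.succ - α i) ^ h))
      (∏ i : Fin h, (MvPowerSeries.X i.succ - α i)) ∧
    (∏ i : Fin h, (MvPowerSeries.X i.succ - α i)) ∉
      Ideal.span (Set.range fun i : Fin h => (MvPowerSeries.X i.succ - α i) ^ h) ∧
    ¬ IsIntegrallyClosedIdeal
      (Ideal.span (Set.range fun i : Fin h => (MvPowerSeries.X i.succ - α i) ^ h)) := by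
  set I := Ideal.span (Set.range fun i : Fin h => (X i.succ - α i) ^ h)
  set ξ := ∏ i : Fin h, (X i.succ - α i)
  have hpow : ξ ^ h = ∏ i : Fin h, (X i.succ - α i) ^ h := (Finset.prod_pow _ _ _).symm
  have hmem : ∏ i : Fin h, (X i.succ - α i) ^ h ∈ I ^ h := by
    simpa using Ideal.prod_mem_prod (s := Finset.univ) (I := fun _ => I)
      fun i _ => Ideal.subset_span ⟨i, rfl⟩
  have hint : IsIntegralOverIdeal I ξ := isIntegralOverIdeal_of_pow_mem (by omega) (hpow ▸ hmem)
  have hξ : ξ ∉ I := prod_X_sub_notMem_span_pow (Fin.succ_injective h) Fin.succ_ne_zero hα hh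
  exact ⟨hpow, hmem, hint, hξ, fun H => hξ (H ξ hint)⟩
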